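/- Let C be a cartesian closed category, let R be an object of C, and let F, G be endofunctors of C. Suppose there is a natural isomorphism of functors Cᵒᵖ ⥤ C between α ↦ (G.obj α ⟹ R) and α ↦ F.obj (α ⟹ R). If (A, a : G.obj A ⟶ A) is an initial G-algebra and (C₀, c : C₀ ⟶ F.obj C₀) is a terminal F-coalgebra, then the objects A ⟹ R and C₀ are isomorphic in C. -/

import Mathlib

/-!
In a symmetric monoidal closed category both `Y ⟶ (X ⟹ R)` and `X ⟶ (Y ⟹ R)` correspond
to `X ⊗ Y ⟶ R`, so `(· ⟹ R) : Cᵒᵖ ⥤ C` is right adjoint to its own opposite. An adjunction whose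
right adjoint intertwines `G` with `F` lifts to coalgebras, so that right adjoint sends terminal
`G`-coalgebras to terminal `F`-coalgebras. An initial `G`-algebra is a terminal
`G.op`-coalgebra in `Cᵒᵖ`, hence `A ⟹ R` carries a terminal `F`-coalgebra, which is unique up
to isomorphism.
-/

open CategoryTheory CategoryTheory.Limits Opposite MonoidalCategory MonoidalClosed

namespace CategoryTheory

namespace Limits

variable {C D : Type*} [Category C] [Category D]

def IsTerminal.ofHomEquiv {T : D} (hT : IsTerminal T) {T' : C} {Φ : C → D}
    (e : ∀ X, (X ⟶ T') ≃ (Φ X ⟶ T)) : IsTerminal T' :=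
  IsTerminal.ofUniqueHom (fun X => (e X).symm (hT.from _))
    fun X _ => (e X).eq_symm_apply.mpr (hT.hom_ext _ _)

end Limits

namespace MonoidalClosed

variable {C : Type*} [Category C] [MonoidalCategory C] [SymmetricCategory C] [MonoidalClosed C]

noncomputable def ihomSwapEquiv (R X Y : C) : (Y ⟶ (ihom X).obj R) ≃ (X ⟶ (ihom Y).obj R) where
  toFun f := curry ((β_ Y X).hom ≫ uncurry f)
  invFun g := curry ((β_ X Y).hom ≫ uncurry g)
  left_inv f := by simp
  right_inv g := by simp

lemma ihomSwapEquiv_comp {R X Y Y' : C} (y : Y' ⟶ Y) (f : Y ⟶ (ihom X).obj R) :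
    ihomSwapEquiv R X Y' (y ≫ f) = ihomSwapEquiv R X Y f ≫ (pre y).app R := by
  apply uncurry_injective
  simp only [ihomSwapEquiv, Equiv.coe_fn_mk, uncurry_pre_app, uncurry_curry]
  rw [uncurry_natural_left, BraidedCategory.braiding_naturality_left_assoc]

noncomputable def internalHomFlipObjRightOpAdjunction (R : C) :
    (internalHom.flip.obj R).rightOp ⊣ internalHom.flip.obj R :=
  Adjunction.mkOfHomEquiv
    { homEquiv := fun X Y => (opEquiv _ _).trans (ihomSwapEquiv R X Y.unop)
      homEquiv_naturality_left_symm := fun f g => congrArg Quiver.Hom.op (ihomSwapEquiv_comp f g)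
      homEquiv_naturality_right := fun f g => ihomSwapEquiv_comp g.unop f.unop }

end MonoidalClosed

namespace Endofunctor

variable {D E : Type*} [Category D] [Category E] {G : D ⥤ D} {F : E ⥤ E}

namespace Coalgebra

abbrev transport (P : D ⥤ E) (η : G ⋙ P ⟶ P ⋙ F) (T : Coalgebra G) : Coalgebra F :=
  ⟨P.obj T.V, P.map T.str ≫ η.app T.V⟩

/-- The object part of the left adjoint of `transport P η.hom` when `η` is invertible;
`homEquivTransport` is the lifted adjunction. -/
abbrev transportLeft {L : E ⥤ D} {P : D ⥤ E} (adj : L ⊣ P) (η : P ⋙ F ⟶ G ⋙ P)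
    (X : Coalgebra F) : Coalgebra G :=
  ⟨L.obj X.V, (adj.homEquiv _ _).symm (X.str ≫ F.map (adj.unit.app X.V) ≫ η.app (L.obj X.V))⟩

variable {L : E ⥤ D} {P : D ⥤ E} (adj : L ⊣ P) (η : G ⋙ P ≅ P ⋙ F)

lemma transportLeft_str_comp_iff {X : Coalgebra F} {T : Coalgebra G} (f : L.obj X.V ⟶ T.V) :
    (transportLeft adj η.inv X).str ≫ G.map f = f ≫ T.str ↔
      X.str ≫ F.map (adj.homEquiv _ _ f) = adj.homEquiv _ _ f ≫ (transport P η.hom T).str := by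
  have hη : η.inv.app (L.obj X.V) ≫ P.map (G.map f) = F.map (P.map f) ≫ η.inv.app T.V :=
    (η.inv.naturality f).symm
  rw [← (adj.homEquiv _ _).apply_eq_iff_eq, adj.homEquiv_naturality_right,
    adj.homEquiv_naturality_right, Equiv.apply_symm_apply, Category.assoc, Category.assoc, hη,
    ← F.map_comp_assoc, ← adj.homEquiv_unit, ← Iso.app_inv, ← Category.assoc, Iso.comp_inv_eq,
    Iso.app_hom, Category.assoc]

def homEquivTransport (X : Coalgebra F) (T : Coalgebra G) :
    (transportLeft adj η.inv X ⟶ T) ≃ (X ⟶ transport P η.hom T) where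
  toFun f := ⟨adj.homEquiv _ _ f.f, (transportLeft_str_comp_iff adj η f.f).mp f.h⟩
  invFun g := ⟨(adj.homEquiv _ _).symm g.f, (transportLeft_str_comp_iff adj η _).mpr
    (by simpa only [Equiv.apply_symm_apply] using g.h)⟩
  left_inv f := Coalgebra.Hom.ext ((adj.homEquiv _ _).symm_apply_apply _)
  right_inv g := Coalgebra.Hom.ext ((adj.homEquiv _ _).apply_symm_apply _)

def isTerminalTransport {T : Coalgebra G} (hT : IsTerminal T) :
    IsTerminal (transport P η.hom T) :=
  hT.ofHomEquiv fun X => (homEquivTransport adj η X T).symm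

end Coalgebra

def Algebra.toCoalgebraOp (A : Algebra G) : Coalgebra G.op := ⟨op A.a, A.str.op⟩

def Coalgebra.unopAlgebra (V : Coalgebra G.op) : Algebra G := ⟨unop V.V, V.str.unop⟩

def Algebra.homToCoalgebraOpEquiv (A : Algebra G) (V : Coalgebra G.op) :
    (V ⟶ A.toCoalgebraOp) ≃ (A ⟶ V.unopAlgebra) where
  toFun f := ⟨f.f.unop, Quiver.Hom.op_inj f.h⟩
  invFun g := ⟨g.f.op, Quiver.Hom.unop_inj g.h⟩
  left_inv _ := rfl
  right_inv _ := rfl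

def Algebra.isTerminalToCoalgebraOp {A : Algebra G} (hA : IsInitial A) :
    IsTerminal A.toCoalgebraOp :=
  hA.op.ofHomEquiv fun V => (A.homToCoalgebraOpEquiv V).trans (opEquiv _ _).symm

end Endofunctor

end CategoryTheory

/-- If `(G α ⟹ R)` is naturally isomorphic to `F (α ⟹ R)` (contravariantly in `α`),
the carrier `A` of an initial `G`-algebra gives `A ⟹ R` isomorphic to the carrier of a
terminal `F`-coalgebra: `(μα. Gα) ⟹ R ≅ να. Fα`. -/
theorem internalHom_initial_algebra_iso_terminal_coalgebra
    {C : Type*} [Category C] [CartesianMonoidalCategory C] [MonoidalClosed C]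
    (R : C) (F G : C ⥤ C)
    (η : G.op ⋙ CategoryTheory.MonoidalClosed.internalHom.flip.obj R ≅
         CategoryTheory.MonoidalClosed.internalHom.flip.obj R ⋙ F)
    (A : C) (a : G.obj A ⟶ A)
    (hA : Nonempty (IsInitial (Endofunctor.Algebra.mk A a : Endofunctor.Algebra G)))
    (C₀ : C) (c : C₀ ⟶ F.obj C₀)
    (hC : Nonempty (IsTerminal (Endofunctor.Coalgebra.mk C₀ c : Endofunctor.Coalgebra F))) :
    Nonempty (((CategoryTheory.MonoidalClosed.internalHom.flip.obj R).obj (op A)) ≅ C₀) := by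
  let _ : BraidedCategory C := .ofCartesianMonoidalCategory
  obtain ⟨hA⟩ := hA
  obtain ⟨hC⟩ := hC
  have hT := Endofunctor.Coalgebra.isTerminalTransport (internalHomFlipObjRightOpAdjunction R) η
    (Endofunctor.Algebra.isTerminalToCoalgebraOp hA)
  exact ⟨(Endofunctor.Coalgebra.forget F).mapIso (hT.uniqueUpToIso hC)⟩
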